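/- arXiv:2505.08152 — 3 statements merged into one kernel-verified Lean document; each statement's English description precedes it below -/
import Mathlib

section
/- Decay along the normalized gradient flow under a Łojasiewicz inequality: let U ⊆ ℝ^l be open and f : U → ℝ continuously differentiable, and suppose there exist γ ∈ (0, 1) and K ≥ 2 such that |f(y)|^{1−γ} ≤ K‖∇f(y)‖ for all y ∈ U. Let t₀ > 0 and b ∈ U with f(b) > 0, and let v : [0, t₀] → U be a differentiable curve with v(0) = b such that for every t ∈ [0, t₀]: if f(v(t)) > f(b)/2 then v′(t) = −∇f(v(t))/‖∇f(v(t))‖, and otherwise v′(t) = 0. Then for every t ∈ [0, t₀] with t ≤ f(b)^γ/2 one has f(v(t)) − f(b) ≤ −(1/(2K)) · t · f(b)^{1−γ}. -/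
/-!
Along the flow, `t ↦ f (v t)` has derivative `⟪∇f (v t), v' t⟫`, which is `-‖∇f (v t)‖` while
`f (v t) > f b / 2` and `0` afterwards. In the first regime the Łojasiewicz inequality bounds
`‖∇f (v t)‖` below by `(f b / 2) ^ (1 - γ) / K ≥ f b ^ (1 - γ) / (2 K)`, so `f (v t)` decreases at
least at that rate; once the value has dropped to `f b / 2` it never rises again, and the constraint
`t ≤ f b ^ γ / 2` makes the claimed decrease at most `f b / (4 K) ≤ f b / 2`.
-/

open Set

theorem HasGradientAt.comp_hasDerivAt {E : Type*} [NormedAddCommGroup E] [InnerProductSpace ℝ E]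
    [CompleteSpace E] {f : E → ℝ} {f' : E} {v : ℝ → E} {v' : E} {t : ℝ}
    (hf : HasGradientAt f f' (v t)) (hv : HasDerivAt v v' t) :
    HasDerivAt (fun s => f (v s)) (inner ℝ f' v') t := by
  have := (hasGradientAt_iff_hasFDerivAt.mp hf).comp_hasDerivAt t hv
  rwa [InnerProductSpace.toDual_apply_apply] at this

theorem inner_neg_inv_norm_smul_self {E : Type*} [NormedAddCommGroup E] [InnerProductSpace ℝ E]
    (x : E) : inner ℝ x (-(‖x‖⁻¹) • x) = -‖x‖ := by
  rcases eq_or_ne x 0 with rfl | hx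
  · simp
  · rw [real_inner_smul_right, real_inner_self_eq_norm_sq]
    field_simp

theorem rpow_div_two_le_rpow {a y p : ℝ} (ha : 0 ≤ a) (hy : a / 2 ≤ y) (hp₀ : 0 ≤ p)
    (hp₁ : p ≤ 1) : a ^ p / 2 ≤ y ^ p :=
  calc a ^ p / 2 ≤ a ^ p / 2 ^ p := by
        gcongr
        simpa using Real.rpow_le_rpow_of_exponent_le (by norm_num : (1 : ℝ) ≤ 2) hp₁
    _ = (a / 2) ^ p := (Real.div_rpow ha zero_le_two p).symm
    _ ≤ y ^ p := Real.rpow_le_rpow (by positivity) hy hp₀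

theorem rpow_div_two_mul_le_of_abs_rpow_le_mul {a y p K n : ℝ} (ha : 0 < a) (hy : a / 2 < y)
    (hp₀ : 0 ≤ p) (hp₁ : p ≤ 1) (hK : 0 < K) (h : |y| ^ p ≤ K * n) : a ^ p / (2 * K) ≤ n := by
  have hya := rpow_div_two_le_rpow ha.le hy.le hp₀ hp₁
  rw [← abs_of_pos ((half_pos ha).trans hy)] at hya
  rw [div_le_iff₀ (by positivity)]
  linarith

theorem antitoneOn_Icc_of_hasDerivAt_nonpos {g g' : ℝ → ℝ} {a b : ℝ}
    (hg : ∀ x ∈ Icc a b, HasDerivAt g (g' x) x) (hg' : ∀ x ∈ Icc a b, g' x ≤ 0) :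
    AntitoneOn g (Icc a b) := by
  refine antitoneOn_of_hasDerivWithinAt_nonpos (f' := g') (convex_Icc a b)
    (fun x hx => (hg x hx).continuousAt.continuousWithinAt) (fun x hx => ?_) (fun x hx => ?_)
  all_goals rw [interior_Icc] at hx
  · exact (hg x (Ioo_subset_Icc_self hx)).hasDerivWithinAt
  · exact hg' x (Ioo_subset_Icc_self hx)

theorem le_sub_mul_or_le_of_hasDerivAt {g g' : ℝ → ℝ} {a T c m : ℝ}
    (hg : ∀ x ∈ Icc a T, HasDerivAt g (g' x) x) (hg'_nonpos : ∀ x ∈ Icc a T, g' x ≤ 0)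
    (hg'_le : ∀ x ∈ Icc a T, m < g x → g' x ≤ -c) :
    ∀ t ∈ Icc a T, g t ≤ g a - c * (t - a) ∨ g t ≤ m := by
  intro t ht
  have hsub : Icc a t ⊆ Icc a T := Icc_subset_Icc_right ht.2
  by_cases habove : ∀ x ∈ Icc a t, m < g x
  · left
    have hanti : AntitoneOn (fun x => g x + c * x) (Icc a t) :=
      antitoneOn_Icc_of_hasDerivAt_nonpos (g' := fun x => g' x + c)
        (fun x hx => ((hg x (hsub hx)).add ((hasDerivAt_id' x).const_mul c)).congr_deriv
          (by rw [mul_one]))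
        (fun x hx => by linarith [hg'_le x (hsub hx) (habove x hx)])
    have := hanti (left_mem_Icc.2 ht.1) (right_mem_Icc.2 ht.1) ht.1
    linarith
  · right
    push Not at habove
    obtain ⟨x, hx, hgx⟩ := habove
    exact (antitoneOn_Icc_of_hasDerivAt_nonpos hg hg'_nonpos (hsub hx) ht hx.2).trans hgx

theorem gradient_flow_decay_general
    (l : ℕ) (U : Set (EuclideanSpace ℝ (Fin l))) (hU : IsOpen U)
    (f : EuclideanSpace ℝ (Fin l) → ℝ) (hf : ContDiffOn ℝ 1 f U)
    (γ K : ℝ) (hγ : γ ∈ Set.Ioo (0 : ℝ) 1) (hK : 2 ≤ K)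
    (hLoj : ∀ y ∈ U, |f y| ^ (1 - γ) ≤ K * ‖gradient f y‖)
    (t₀ : ℝ)
    (b : EuclideanSpace ℝ (Fin l)) (hfb : 0 < f b)
    (v v' : ℝ → EuclideanSpace ℝ (Fin l))
    (hv0 : v 0 = b) (hvU : ∀ t ∈ Set.Icc (0 : ℝ) t₀, v t ∈ U)
    (hderiv : ∀ t ∈ Set.Icc (0 : ℝ) t₀, HasDerivAt v (v' t) t)
    (hflow : ∀ t ∈ Set.Icc (0 : ℝ) t₀,
      (f (v t) > f b / 2 → v' t = -(‖gradient f (v t)‖⁻¹) • gradient f (v t)) ∧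
      (¬ f (v t) > f b / 2 → v' t = 0)) :
    ∀ t ∈ Set.Icc (0 : ℝ) t₀, t ≤ f b ^ γ / 2 →
      f (v t) - f b ≤ -(1 / (2 * K)) * t * f b ^ (1 - γ) := by
  obtain ⟨hγ₀, hγ₁⟩ := hγ
  have hslope (s) (hs : s ∈ Icc 0 t₀) :
      HasDerivAt (fun u => f (v u)) (inner ℝ (gradient f (v s)) (v' s)) s :=
    ((hf.contDiffAt (hU.mem_nhds (hvU s hs))).differentiableAt one_ne_zero).hasGradientAt
      |>.comp_hasDerivAt (hderiv s hs)
  have hslope_nonpos (s) (hs : s ∈ Icc 0 t₀) : inner ℝ (gradient f (v s)) (v' s) ≤ 0 := by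
    by_cases h : f (v s) > f b / 2
    · rw [(hflow s hs).1 h, inner_neg_inv_norm_smul_self]
      exact neg_nonpos.2 (norm_nonneg _)
    · rw [(hflow s hs).2 h, inner_zero_right]
  have hslope_le (s) (hs : s ∈ Icc 0 t₀) (h : f b / 2 < f (v s)) :
      inner ℝ (gradient f (v s)) (v' s) ≤ -(f b ^ (1 - γ) / (2 * K)) := by
    rw [(hflow s hs).1 h, inner_neg_inv_norm_smul_self, neg_le_neg_iff]
    exact rpow_div_two_mul_le_of_abs_rpow_le_mul hfb h (by linarith) (by linarith) (by linarith)
      (hLoj _ (hvU s hs))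
  intro t ht htle
  rcases le_sub_mul_or_le_of_hasDerivAt hslope hslope_nonpos hslope_le t ht with h | h
  · rw [hv0] at h
    linarith [show -(1 / (2 * K)) * t * f b ^ (1 - γ) = -(f b ^ (1 - γ) / (2 * K) * (t - 0)) by ring]
  · have hdrop_small : t * f b ^ (1 - γ) / (2 * K) ≤ f b / 2 :=
      calc t * f b ^ (1 - γ) / (2 * K) ≤ t * f b ^ (1 - γ) :=
            div_le_self (mul_nonneg ht.1 (by positivity)) (by linarith)
        _ ≤ f b ^ γ / 2 * f b ^ (1 - γ) := by gcongr
        _ = f b / 2 := by rw [div_mul_eq_mul_div, ← Real.rpow_add hfb]; simp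
    linarith [show -(1 / (2 * K)) * t * f b ^ (1 - γ) = -(t * f b ^ (1 - γ) / (2 * K)) by ring]

/-- **Decay along the normalized gradient flow under a Łojasiewicz inequality.**
Let `U ⊆ ℝ^l` be open and `f : U → ℝ` continuously differentiable, satisfying the
Łojasiewicz inequality `|f(y)|^{1−γ} ≤ K‖∇f(y)‖` on `U` with `γ ∈ (0,1)` and `K ≥ 2`.
If `v` is the normalized gradient flow of `f` starting at `b ∈ U` with `f(b) > 0`,
truncated once the value drops to `f(b)/2`, then for every `t ∈ [0, t₀]` with
`t ≤ f(b)^γ/2` one has `f(v(t)) − f(b) ≤ −(1/(2K))·t·f(b)^{1−γ}`. -/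
theorem gradient_flow_decay
    (l : ℕ) (U : Set (EuclideanSpace ℝ (Fin l))) (hU : IsOpen U)
    (f : EuclideanSpace ℝ (Fin l) → ℝ) (hf : ContDiffOn ℝ 1 f U)
    (γ K : ℝ) (hγ : γ ∈ Set.Ioo (0 : ℝ) 1) (hK : 2 ≤ K)
    (hLoj : ∀ y ∈ U, |f y| ^ (1 - γ) ≤ K * ‖gradient f y‖)
    (t₀ : ℝ) (ht₀ : 0 < t₀)
    (b : EuclideanSpace ℝ (Fin l)) (hb : b ∈ U) (hfb : 0 < f b)
    (v v' : ℝ → EuclideanSpace ℝ (Fin l))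
    (hv0 : v 0 = b) (hvU : ∀ t ∈ Set.Icc (0 : ℝ) t₀, v t ∈ U)
    (hderiv : ∀ t ∈ Set.Icc (0 : ℝ) t₀, HasDerivAt v (v' t) t)
    (hflow : ∀ t ∈ Set.Icc (0 : ℝ) t₀,
      (f (v t) > f b / 2 → v' t = -(‖gradient f (v t)‖⁻¹) • gradient f (v t)) ∧
      (¬ f (v t) > f b / 2 → v' t = 0)) :
    ∀ t ∈ Set.Icc (0 : ℝ) t₀, t ≤ f b ^ γ / 2 →
      f (v t) - f b ≤ -(1 / (2 * K)) * t * f b ^ (1 - γ) :=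
  gradient_flow_decay_general l U hU f hf γ K hγ hK hLoj t₀ b hfb v v' hv0 hvU hderiv hflow
end

section
/- Monotonicity and energy identity along the truncated normalized gradient flow: let U ⊆ ℝ^l be open, f : U → ℝ continuously differentiable, t₀ > 0, b ∈ U, and c < f(b). Let v : [0, t₀] → U be a differentiable curve with v(0) = b such that for every t ∈ [0, t₀]: if f(v(t)) > c then ∇f(v(t)) ≠ 0 and v′(t) = −∇f(v(t))/‖∇f(v(t))‖, and otherwise v′(t) = 0. Then the function t ↦ f(v(t)) is nonincreasing on [0, t₀]; moreover, for every t ∈ [0, t₀] such that f(v(s)) > c for all s ∈ [0, t), one has f(v(t)) − f(b) = −∫₀^t ‖∇f(v(s))‖ ds. -/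
/-!
Along the flow, the chain rule gives `(f ∘ v)' = ⟪∇f(v), v'⟫`, which is `-‖∇f(v)‖` while the value
exceeds `c` and `0` afterwards. A nonpositive derivative makes `f ∘ v` antitone, and on an interval
where the value stays above `c` the fundamental theorem of calculus, applied to the continuous
integrand `-‖∇f(v(s))‖`, gives the energy identity.
-/

open MeasureTheory Set

open scoped InnerProductSpace RealInnerProductSpace

variable {E : Type*} [NormedAddCommGroup E] [InnerProductSpace ℝ E]

lemma real_inner_neg_inv_norm_smul_self (g : E) : ⟪g, -(‖g‖⁻¹) • g⟫ = -‖g‖ := by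
  rcases eq_or_ne g 0 with rfl | hg
  · simp
  rw [real_inner_smul_right, real_inner_self_eq_norm_sq]
  field_simp [norm_ne_zero_iff.2 hg]

namespace ContDiffOn

variable [CompleteSpace E] {f : E → ℝ} {U : Set E}

lemma continuousOn_gradient (hf : ContDiffOn ℝ 1 f U) (hU : IsOpen U) :
    ContinuousOn (gradient f) U :=
  (InnerProductSpace.toDual ℝ E).symm.continuous.comp_continuousOn
    (hf.continuousOn_fderiv_of_isOpen hU le_rfl)

lemma hasDerivAt_comp (hf : ContDiffOn ℝ 1 f U) (hU : IsOpen U) {v : ℝ → E} {w : E} {t : ℝ}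
    (hvU : v t ∈ U) (hv : HasDerivAt v w t) :
    HasDerivAt (fun s => f (v s)) ⟪gradient f (v t), w⟫ t := by
  have hgrad : HasGradientAt f (gradient f (v t)) (v t) :=
    ((hf.differentiableOn one_ne_zero).differentiableAt (hU.mem_nhds hvU)).hasGradientAt
  have h := hgrad.hasFDerivAt.comp_hasDerivAt t hv
  simp only [InnerProductSpace.toDual_apply_apply] at h
  exact h

variable (hf : ContDiffOn ℝ 1 f U) (hU : IsOpen U) {v v' : ℝ → E} {a b : ℝ}
  (hvU : ∀ t ∈ Icc a b, v t ∈ U) (hderiv : ∀ t ∈ Icc a b, HasDerivAt v (v' t) t)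
include hf hU hvU hderiv

lemma antitoneOn_comp_of_inner_gradient_nonpos
    (hdescent : ∀ t ∈ Ioo a b, ⟪gradient f (v t), v' t⟫ ≤ 0) :
    AntitoneOn (fun t => f (v t)) (Icc a b) := by
  have hcomp t (ht : t ∈ Icc a b) := hf.hasDerivAt_comp hU (hvU t ht) (hderiv t ht)
  refine antitoneOn_of_hasDerivWithinAt_nonpos (f' := fun t => ⟪gradient f (v t), v' t⟫)
    (convex_Icc a b)
    (fun t ht => (hcomp t ht).continuousAt.continuousWithinAt) (fun t ht => ?_) ?_
  · rw [interior_Icc] at ht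
    exact (hcomp t (Ioo_subset_Icc_self ht)).hasDerivWithinAt
  · simpa only [interior_Icc] using hdescent

lemma sub_eq_neg_integral_norm_gradient (hab : a ≤ b)
    (hflow : ∀ t ∈ Ioo a b, v' t = -(‖gradient f (v t)‖⁻¹) • gradient f (v t)) :
    f (v b) - f (v a) = -∫ s in a..b, ‖gradient f (v s)‖ := by
  have hcomp t (ht : t ∈ Icc a b) := hf.hasDerivAt_comp hU (hvU t ht) (hderiv t ht)
  have hv : ContinuousOn v (Icc a b) := fun t ht => (hderiv t ht).continuousAt.continuousWithinAt
  have hspeed : ContinuousOn (fun s => ‖gradient f (v s)‖) (Icc a b) :=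
    ((hf.continuousOn_gradient hU).comp hv hvU).norm
  rw [← intervalIntegral.integral_neg, eq_comm]
  refine intervalIntegral.integral_eq_sub_of_hasDeriv_right_of_le hab
    (fun t ht => (hcomp t ht).continuousAt.continuousWithinAt) (fun t ht => ?_)
    (hspeed.neg.intervalIntegrable_of_Icc hab)
  have h := hcomp t (Ioo_subset_Icc_self ht)
  rw [hflow t ht, real_inner_neg_inv_norm_smul_self] at h
  exact h.hasDerivWithinAt

end ContDiffOn

theorem gradient_flow_monotone_and_energy_identity_general
    (l : ℕ) (U : Set (EuclideanSpace ℝ (Fin l))) (hU : IsOpen U)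
    (f : EuclideanSpace ℝ (Fin l) → ℝ) (hf : ContDiffOn ℝ 1 f U)
    (t₀ : ℝ)
    (b : EuclideanSpace ℝ (Fin l))
    (c : ℝ)
    (v v' : ℝ → EuclideanSpace ℝ (Fin l))
    (hv0 : v 0 = b) (hvU : ∀ t ∈ Set.Icc (0 : ℝ) t₀, v t ∈ U)
    (hderiv : ∀ t ∈ Set.Icc (0 : ℝ) t₀, HasDerivAt v (v' t) t)
    (hflow : ∀ t ∈ Set.Icc (0 : ℝ) t₀,
      (f (v t) > c → gradient f (v t) ≠ 0 ∧
        v' t = -(‖gradient f (v t)‖⁻¹) • gradient f (v t)) ∧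
      (¬ f (v t) > c → v' t = 0)) :
    AntitoneOn (fun t => f (v t)) (Set.Icc 0 t₀) ∧
    ∀ t ∈ Set.Icc (0 : ℝ) t₀, (∀ s ∈ Set.Ico (0 : ℝ) t, c < f (v s)) →
      f (v t) - f b = -∫ s in (0 : ℝ)..t, ‖gradient f (v s)‖ := by
  have hdescent : ∀ t ∈ Ioo 0 t₀, ⟪gradient f (v t), v' t⟫ ≤ 0 := by
    intro t ht
    by_cases hgt : f (v t) > c
    · rw [((hflow t (Ioo_subset_Icc_self ht)).1 hgt).2, real_inner_neg_inv_norm_smul_self]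
      exact neg_nonpos.2 (norm_nonneg _)
    · rw [(hflow t (Ioo_subset_Icc_self ht)).2 hgt, inner_zero_right]
  refine ⟨hf.antitoneOn_comp_of_inner_gradient_nonpos hU hvU hderiv hdescent, fun t ht hlt => ?_⟩
  have hsub : Icc 0 t ⊆ Icc 0 t₀ := Icc_subset_Icc_right ht.2
  rw [← hv0]
  exact hf.sub_eq_neg_integral_norm_gradient hU (fun s hs => hvU s (hsub hs))
    (fun s hs => hderiv s (hsub hs)) ht.1
    (fun s hs => ((hflow s (hsub (Ioo_subset_Icc_self hs))).1 (hlt s (Ioo_subset_Ico_self hs))).2)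

/-- **Monotonicity and energy identity along the truncated normalized gradient flow.**
Let `U ⊆ ℝ^l` be open, `f : U → ℝ` continuously differentiable, `t₀ > 0`, `b ∈ U`, and
`c < f(b)`. Let `v : [0, t₀] → U` be the normalized gradient flow of `f` starting at `b`,
truncated once the value drops to `c`. Then `t ↦ f(v(t))` is nonincreasing on `[0, t₀]`,
and for every `t ∈ [0, t₀]` such that `f(v(s)) > c` for all `s ∈ [0, t)` one has
`f(v(t)) − f(b) = −∫₀^t ‖∇f(v(s))‖ ds`. -/
theorem gradient_flow_monotone_and_energy_identity
    (l : ℕ) (U : Set (EuclideanSpace ℝ (Fin l))) (hU : IsOpen U)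
    (f : EuclideanSpace ℝ (Fin l) → ℝ) (hf : ContDiffOn ℝ 1 f U)
    (t₀ : ℝ) (ht₀ : 0 < t₀)
    (b : EuclideanSpace ℝ (Fin l)) (hb : b ∈ U)
    (c : ℝ) (hc : c < f b)
    (v v' : ℝ → EuclideanSpace ℝ (Fin l))
    (hv0 : v 0 = b) (hvU : ∀ t ∈ Set.Icc (0 : ℝ) t₀, v t ∈ U)
    (hderiv : ∀ t ∈ Set.Icc (0 : ℝ) t₀, HasDerivAt v (v' t) t)
    (hflow : ∀ t ∈ Set.Icc (0 : ℝ) t₀,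
      (f (v t) > c → gradient f (v t) ≠ 0 ∧
        v' t = -(‖gradient f (v t)‖⁻¹) • gradient f (v t)) ∧
      (¬ f (v t) > c → v' t = 0)) :
    AntitoneOn (fun t => f (v t)) (Set.Icc 0 t₀) ∧
    ∀ t ∈ Set.Icc (0 : ℝ) t₀, (∀ s ∈ Set.Ico (0 : ℝ) t, c < f (v s)) →
      f (v t) - f b = -∫ s in (0 : ℝ)..t, ‖gradient f (v s)‖ :=
  gradient_flow_monotone_and_energy_identity_general l U hU f hf t₀ b c v v' hv0 hvU hderiv hflow
end

section
/- Logarithmic decay from the epiperimetric differential inequality: let n ≥ 3, ε ∈ (0, 1), γ ∈ (0, 1), and ρ̃ > 0. Let e : (0, ρ̃) → ℝ be nonnegative and differentiable, set f(ρ) := ρ^{n−2} e(ρ), and assume that f is monotone nondecreasing on (0, ρ̃) and that f(ρ) ≤ (1 − ε e(ρ)^γ) (ρ/(n−2)) f′(ρ) for every ρ ∈ (0, ρ̃). Then e(ρ) ≤ ((n−2) ε γ log(ρ̃/ρ))^{−1/γ} for every ρ ∈ (0, ρ̃). -/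
/-!
With `m = n - 2` and `f = ρ^m e`, one has `ρ f' = ρ^m (m e + ρ e')`, so the differential inequality
together with `f' ≥ 0` yields the ODE inequality `ρ e' ≥ m ε e^{1+γ}` wherever `e > 0`; and `e`
stays positive on `[ρ, ρ̃)` once `e(ρ) > 0`, because `f` is nondecreasing. This makes
`e^{-γ} + m ε γ log` nonincreasing on `[ρ, ρ̃)`, and letting the right endpoint tend to `ρ̃` gives
`e(ρ)^{-γ} ≥ m ε γ log(ρ̃/ρ)`.
-/

open Real Set Filter Topology

lemma mul_deriv_pow_mul {e : ℝ → ℝ} {σ : ℝ} (k : ℕ) (hd : DifferentiableAt ℝ e σ) :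
    σ * deriv (fun r => r ^ k * e r) σ = σ ^ k * (k * e σ + σ * deriv e σ) := by
  rw [((hasDerivAt_pow k σ).fun_mul hd.hasDerivAt).deriv]
  rcases k with _ | k
  · simp
  · simp only [Nat.add_sub_cancel, pow_succ]
    ring

lemma mul_le_of_le_one_sub_mul_add {a d t : ℝ} (ht : 0 < t) (had : 0 ≤ a + d)
    (h : a ≤ (1 - t) * (a + d)) : t * a ≤ d := by
  have hd : 0 ≤ d := by nlinarith [mul_nonneg ht.le had]
  nlinarith [mul_nonneg ht.le hd]

lemma mul_rpow_add_one_le_mul_deriv {e : ℝ → ℝ} {k : ℕ} {ε γ σ : ℝ}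
    (hk : 0 < k) (hε : 0 < ε) (hσ : 0 < σ) (he : 0 < e σ) (hd : DifferentiableAt ℝ e σ)
    (hmono : 0 ≤ deriv (fun r => r ^ k * e r) σ)
    (hineq : σ ^ k * e σ ≤ (1 - ε * e σ ^ γ) * (σ / k) * deriv (fun r => r ^ k * e r) σ) :
    k * ε * e σ ^ (γ + 1) ≤ σ * deriv e σ := by
  have hσk : 0 < σ ^ k := pow_pos hσ k
  have hk' : (0 : ℝ) < k := Nat.cast_pos.2 hk
  have hderiv := mul_deriv_pow_mul k hd
  have hsum : 0 ≤ k * e σ + σ * deriv e σ := by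
    have : 0 ≤ σ ^ k * (k * e σ + σ * deriv e σ) := hderiv ▸ mul_nonneg hσ.le hmono
    exact nonneg_of_mul_nonneg_right (by linarith) hσk
  have hreduced : k * e σ ≤ (1 - ε * e σ ^ γ) * (k * e σ + σ * deriv e σ) := by
    rw [mul_div_assoc', div_mul_eq_mul_div, mul_assoc, hderiv, le_div_iff₀ hk'] at hineq
    nlinarith
  have := mul_le_of_le_one_sub_mul_add (mul_pos hε (rpow_pos_of_pos he γ)) hsum hreduced
  rw [rpow_add_one he.ne']
  linarith

section
variable {e : ℝ → ℝ} {c γ a b : ℝ}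

lemma antitoneOn_rpow_neg_add_mul_log (hγ : 0 < γ) (ha : 0 < a)
    (hpos : ∀ σ ∈ Ico a b, 0 < e σ) (hdiff : ∀ σ ∈ Ico a b, DifferentiableAt ℝ e σ)
    (hineq : ∀ σ ∈ Ioo a b, c * e σ ^ (γ + 1) ≤ σ * deriv e σ) :
    AntitoneOn (fun σ => e σ ^ (-γ) + c * γ * log σ) (Ico a b) := by
  have hderiv : ∀ σ ∈ Ico a b, HasDerivAt (fun σ => e σ ^ (-γ) + c * γ * log σ)
      (deriv e σ * (-γ) * e σ ^ (-γ - 1) + c * γ * σ⁻¹) σ := fun σ hσ =>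
    ((hdiff σ hσ).hasDerivAt.rpow_const (Or.inl (hpos σ hσ).ne')).add
      ((hasDerivAt_log (ha.trans_le hσ.1).ne').const_mul (c * γ))
  refine antitoneOn_of_hasDerivWithinAt_nonpos (convex_Ico a b)
    (fun σ hσ => (hderiv σ hσ).continuousAt.continuousWithinAt)
    (fun σ hσ => (hderiv σ (Ioo_subset_Ico_self (by rwa [interior_Ico] at hσ))).hasDerivWithinAt)
    (fun σ hσ => ?_)
  rw [interior_Ico] at hσ
  have hσ0 : 0 < σ := ha.trans hσ.1
  have heσ := hpos σ (Ioo_subset_Ico_self hσ)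
  have hP : 0 < e σ ^ (γ + 1) := rpow_pos_of_pos heσ _
  have hslope : c / σ ≤ deriv e σ / e σ ^ (γ + 1) := by
    rw [div_le_div_iff₀ hσ0 hP]
    linarith [hineq σ hσ]
  rw [show -γ - 1 = -(γ + 1) by ring, rpow_neg heσ.le]
  have := mul_le_mul_of_nonneg_left hslope hγ.le
  rw [div_eq_mul_inv, div_eq_mul_inv] at this
  linarith

lemma mul_log_div_le_rpow_neg (hγ : 0 < γ) (ha : 0 < a) (hab : a < b)
    (hpos : ∀ σ ∈ Ico a b, 0 < e σ) (hdiff : ∀ σ ∈ Ico a b, DifferentiableAt ℝ e σ)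
    (hineq : ∀ σ ∈ Ioo a b, c * e σ ^ (γ + 1) ≤ σ * deriv e σ) :
    c * γ * log (b / a) ≤ e a ^ (-γ) := by
  have hanti := antitoneOn_rpow_neg_add_mul_log hγ ha hpos hdiff hineq
  have hbound : ∀ σ ∈ Ioo a b, c * γ * log σ ≤ e a ^ (-γ) + c * γ * log a := fun σ hσ => by
    have := hanti (left_mem_Ico.2 hab) (Ioo_subset_Ico_self hσ) hσ.1.le
    have := rpow_pos_of_pos (hpos σ (Ioo_subset_Ico_self hσ)) (-γ)
    linarith
  have hlim : c * γ * log b ≤ e a ^ (-γ) + c * γ * log a := by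
    have hcont := ((continuousAt_log (ha.trans hab).ne').const_mul (c * γ)).tendsto
    refine le_of_tendsto (x := 𝓝[<] b) (hcont.mono_left nhdsWithin_le_nhds) ?_
    filter_upwards [Ioo_mem_nhdsLT hab] using hbound
  rw [log_div (ha.trans hab).ne' ha.ne']
  linarith

end

lemma le_rpow_neg_inv_of_le_rpow_neg {x y γ : ℝ} (hx : 0 ≤ x) (hy : 0 < y) (hγ : 0 < γ)
    (h : y ≤ x ^ (-γ)) : x ≤ y ^ (-(1 / γ)) := by
  calc x = (x ^ (-γ)) ^ (-(1 / γ)) := by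
        rw [← rpow_mul hx, neg_mul_neg, mul_one_div_cancel hγ.ne', rpow_one]
    _ ≤ y ^ (-(1 / γ)) := rpow_le_rpow_of_nonpos hy h (by simp [hγ.le])

theorem log_decay_of_epiperimetric_diff_ineq_general
    (n : ℕ) (hn : 3 ≤ n) (ε γ ρt : ℝ)
    (hε : ε ∈ Set.Ioo (0 : ℝ) 1) (hγ : γ ∈ Set.Ioo (0 : ℝ) 1)
    (e : ℝ → ℝ)
    (he : ∀ ρ ∈ Set.Ioo (0 : ℝ) ρt, 0 ≤ e ρ)
    (hediff : ∀ ρ ∈ Set.Ioo (0 : ℝ) ρt, DifferentiableAt ℝ e ρ)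
    (hmono : MonotoneOn (fun ρ => ρ ^ (n - 2) * e ρ) (Set.Ioo 0 ρt))
    (hineq : ∀ ρ ∈ Set.Ioo (0 : ℝ) ρt,
      ρ ^ (n - 2) * e ρ ≤
        (1 - ε * e ρ ^ γ) * (ρ / ((n : ℝ) - 2)) *
          deriv (fun r => r ^ (n - 2) * e r) ρ) :
    ∀ ρ ∈ Set.Ioo (0 : ℝ) ρt,
      e ρ ≤ (((n : ℝ) - 2) * ε * γ * Real.log (ρt / ρ)) ^ (-(1 / γ)) := by
  have hcast : (n : ℝ) - 2 = ((n - 2 : ℕ) : ℝ) := by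
    rw [Nat.cast_sub (by omega : 2 ≤ n), Nat.cast_ofNat]
  rw [hcast] at hineq ⊢
  intro ρ hρ
  have hbase : 0 < ((n - 2 : ℕ) : ℝ) * ε * γ * log (ρt / ρ) :=
    mul_pos (mul_pos (mul_pos (Nat.cast_pos.2 (by omega)) hε.1) hγ.1)
      (log_pos ((one_lt_div hρ.1).2 hρ.2))
  rcases (he ρ hρ).eq_or_lt with hzero | heρ
  · exact hzero ▸ (rpow_pos_of_pos hbase _).le
  have hsub : Ico ρ ρt ⊆ Ioo 0 ρt := fun σ hσ => ⟨hρ.1.trans_le hσ.1, hσ.2⟩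
  have hpos : ∀ σ ∈ Ico ρ ρt, 0 < e σ := fun σ hσ =>
    pos_of_mul_pos_right ((mul_pos (pow_pos hρ.1 _) heρ).trans_le (hmono hρ (hsub hσ) hσ.1))
      (pow_nonneg (hρ.1.trans_le hσ.1).le _)
  have hderiv_nonneg : ∀ σ ∈ Ioo 0 ρt, 0 ≤ deriv (fun r => r ^ (n - 2) * e r) σ := fun σ hσ => by
    rw [← derivWithin_of_mem_nhds (Ioo_mem_nhds hσ.1 hσ.2)]
    exact hmono.derivWithin_nonneg
  have hode : ∀ σ ∈ Ioo ρ ρt, ((n - 2 : ℕ) * ε) * e σ ^ (γ + 1) ≤ σ * deriv e σ :=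
    fun σ hσ => by
      have hσ' := hsub (Ioo_subset_Ico_self hσ)
      exact mul_rpow_add_one_le_mul_deriv (by omega) hε.1 hσ'.1 (hpos σ (Ioo_subset_Ico_self hσ))
        (hediff σ hσ') (hderiv_nonneg σ hσ') (hineq σ hσ')
  exact le_rpow_neg_inv_of_le_rpow_neg heρ.le hbase hγ.1 <|
    mul_log_div_le_rpow_neg hγ.1 hρ.1 hρ.2 hpos (fun σ hσ => hediff σ (hsub hσ)) hode

/-- **Logarithmic decay from the epiperimetric differential inequality.**
Let `n ≥ 3`, `ε, γ ∈ (0,1)`, `ρ̃ > 0`. Let `e : (0, ρ̃) → ℝ` be nonnegative and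
differentiable, `f(ρ) := ρ^{n−2} e(ρ)` monotone nondecreasing, and suppose
`f(ρ) ≤ (1 − ε e(ρ)^γ)(ρ/(n−2)) f′(ρ)` on `(0, ρ̃)`. Then
`e(ρ) ≤ ((n−2) ε γ log(ρ̃/ρ))^{−1/γ}` on `(0, ρ̃)`. -/
theorem log_decay_of_epiperimetric_diff_ineq
    (n : ℕ) (hn : 3 ≤ n) (ε γ ρt : ℝ)
    (hε : ε ∈ Set.Ioo (0 : ℝ) 1) (hγ : γ ∈ Set.Ioo (0 : ℝ) 1) (hρt : 0 < ρt)
    (e : ℝ → ℝ)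
    (he : ∀ ρ ∈ Set.Ioo (0 : ℝ) ρt, 0 ≤ e ρ)
    (hediff : ∀ ρ ∈ Set.Ioo (0 : ℝ) ρt, DifferentiableAt ℝ e ρ)
    (hmono : MonotoneOn (fun ρ => ρ ^ (n - 2) * e ρ) (Set.Ioo 0 ρt))
    (hineq : ∀ ρ ∈ Set.Ioo (0 : ℝ) ρt,
      ρ ^ (n - 2) * e ρ ≤
        (1 - ε * e ρ ^ γ) * (ρ / ((n : ℝ) - 2)) *
          deriv (fun r => r ^ (n - 2) * e r) ρ) :
    ∀ ρ ∈ Set.Ioo (0 : ℝ) ρt,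
      e ρ ≤ (((n : ℝ) - 2) * ε * γ * Real.log (ρt / ρ)) ^ (-(1 / γ)) :=
  log_decay_of_epiperimetric_diff_ineq_general n hn ε γ ρt hε hγ e he hediff hmono hineq
end
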